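/- Let E ⊆ ℝ^N be a closed set with E ≠ ∅ and E ≠ ℝ^N, and let d_E(x) := dist_{φ°}(x,E) − dist_{φ°}(x, ℝ^N \ E) be the signed distance function induced by φ°. Then d_E is Lipschitz (indeed |d_E(x) − d_E(y)| ≤ φ°(x−y) for all x,y), and at every point x ∉ ∂E at which d_E is differentiable one has φ(∇d_E(x)) = 1; in particular φ(∇d_E) = 1 almost everywhere in ℝ^N \ ∂E. -/

import Mathlib

open MeasureTheory Set Filter Topology
open scoped RealInnerProductSpace ENNReal

noncomputable section

/-- An anisotropy (norm) on `ℝ^N`: convex, even, positively 1-homogeneous and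
positive away from the origin. -/
structure IsAnisoNorm {N : ℕ} (φ : EuclideanSpace ℝ (Fin N) → ℝ) : Prop where
  convexOn : ConvexOn ℝ Set.univ φ
  even : ∀ x, φ (-x) = φ x
  homog : ∀ (c : ℝ) (x : EuclideanSpace ℝ (Fin N)), 0 ≤ c → φ (c • x) = c * φ x
  pos : ∀ x : EuclideanSpace ℝ (Fin N), x ≠ 0 → 0 < φ x

/-- The polar norm `φ°(ξ) = sup {ξ·η : φ(η) ≤ 1}`. -/
noncomputable def polar {N : ℕ} (φ : EuclideanSpace ℝ (Fin N) → ℝ)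
    (ξ : EuclideanSpace ℝ (Fin N)) : ℝ :=
  sSup ((fun η => ⟪ξ, η⟫) '' {η : EuclideanSpace ℝ (Fin N) | φ η ≤ 1})

/-- The subdifferential `∂φ(p) = {v : ∀ q, φ(q) ≥ φ(p) + v·(q-p)}`. -/
def subdiff {N : ℕ} (φ : EuclideanSpace ℝ (Fin N) → ℝ) (p : EuclideanSpace ℝ (Fin N)) :
    Set (EuclideanSpace ℝ (Fin N)) :=
  {v | ∀ q, φ p + ⟪v, q - p⟫ ≤ φ q}


/-- The distance induced by the polar norm from a point to a (nonempty) set. -/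
noncomputable def rdistP {N : ℕ} (φ : EuclideanSpace ℝ (Fin N) → ℝ)
    (x : EuclideanSpace ℝ (Fin N)) (F : Set (EuclideanSpace ℝ (Fin N))) : ℝ :=
  sInf ((fun y => polar φ (x - y)) '' F)

/-- The signed distance function `d_E = dist_{φ°}(·,E) - dist_{φ°}(·,Eᶜ)`. -/
noncomputable def signedDistP {N : ℕ} (φ : EuclideanSpace ℝ (Fin N) → ℝ)
    (E : Set (EuclideanSpace ℝ (Fin N))) (x : EuclideanSpace ℝ (Fin N)) : ℝ :=
  rdistP φ x E - rdistP φ x Eᶜ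


/-!
Since `φ` is equivalent to the Euclidean norm, `φ°` is a genuine norm and every distance
`dist_{φ°}(x, F)` is attained at a point of `closure F`. The segment from a point of `E` to a point
of `Eᶜ` meets `closure E ∩ closure Eᶜ`, which splits `φ°(x - y)` into the two distances and gives
the Lipschitz bound. At a differentiability point `x ∉ ∂E` the Lipschitz bound yields
`∇d_E(x) · u ≤ φ°(u)` for all `u`, i.e. `φ(∇d_E(x)) ≤ 1` by Hahn–Banach; conversely `|d_E|`
decreases at unit rate along the segment from `x` to a nearest point of the other side, which gives
`φ(∇d_E(x)) ≥ 1`. The almost-everywhere statement then follows from Rademacher's theorem.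
-/
namespace IsAnisoNorm

variable {N : ℕ} {φ : EuclideanSpace ℝ (Fin N) → ℝ} (hφ : IsAnisoNorm φ)
include hφ

lemma map_zero : φ 0 = 0 := by
  simpa using hφ.homog 0 0 le_rfl

lemma nonneg (x : EuclideanSpace ℝ (Fin N)) : 0 ≤ φ x := by
  rcases eq_or_ne x 0 with rfl | hx
  exacts [hφ.map_zero.ge, (hφ.pos x hx).le]

lemma continuous : Continuous φ :=
  continuousOn_univ.mp (hφ.convexOn.continuousOn isOpen_univ)

lemma exists_norm_le_mul_and_le_mul_norm :
    ∃ C > 0, ∀ x, ‖x‖ ≤ C * φ x ∧ φ x ≤ C * ‖x‖ := by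
  have hS := isCompact_sphere (0 : EuclideanSpace ℝ (Fin N)) 1
  have hne : ∀ u ∈ Metric.sphere (0 : EuclideanSpace ℝ (Fin N)) 1, φ u ≠ 0 := fun u hu =>
    (hφ.pos u (by rintro rfl; simp at hu)).ne'
  obtain ⟨A, hA⟩ := hS.exists_bound_of_continuousOn hφ.continuous.continuousOn
  obtain ⟨B, hB⟩ := hS.exists_bound_of_continuousOn (hφ.continuous.continuousOn.inv₀ hne)
  refine ⟨max (max A B) 1, by positivity, fun x => ?_⟩
  rcases eq_or_ne x 0 with rfl | hx
  · simp [hφ.map_zero]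
  have hx' : ‖x‖ ≠ 0 := norm_ne_zero_iff.mpr hx
  set u := ‖x‖⁻¹ • x
  have hu : u ∈ Metric.sphere 0 1 := by simp [u, norm_smul, hx']
  have hφx : φ x = ‖x‖ * φ u := by
    rw [hφ.homog _ _ (by positivity), ← mul_assoc, mul_inv_cancel₀ hx', one_mul]
  have hφu : 0 < φ u := (hφ.nonneg u).lt_of_ne (hne u hu).symm
  have hAu : φ u ≤ max (max A B) 1 :=
    (le_abs_self _).trans ((hA u hu).trans ((le_max_left _ _).trans (le_max_left _ _)))
  have hBu : (φ u)⁻¹ ≤ max (max A B) 1 := by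
    have := hB u hu
    simp only [Pi.inv_apply, Real.norm_eq_abs] at this
    exact (le_abs_self _).trans (this.trans ((le_max_right _ _).trans (le_max_left _ _)))
  rw [hφx]
  constructor
  · have : 1 ≤ max (max A B) 1 * φ u := by rwa [inv_le_iff_one_le_mul₀ hφu] at hBu
    nlinarith [norm_nonneg x]
  · nlinarith [norm_nonneg x]

end IsAnisoNorm

section Polar

lemma polar_smul {N : ℕ} (φ : EuclideanSpace ℝ (Fin N) → ℝ) {t : ℝ} (ht : 0 ≤ t)
    (ξ : EuclideanSpace ℝ (Fin N)) : polar φ (t • ξ) = t * polar φ ξ := by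
  unfold polar
  rw [← smul_eq_mul, ← Real.sSup_smul_of_nonneg ht, ← Set.image_smul, Set.image_image]
  simp_rw [real_inner_smul_left, smul_eq_mul]

lemma polar_zero {N : ℕ} (φ : EuclideanSpace ℝ (Fin N) → ℝ) : polar φ 0 = 0 := by
  simpa using polar_smul φ le_rfl 0

variable {N : ℕ} {φ : EuclideanSpace ℝ (Fin N) → ℝ} (hφ : IsAnisoNorm φ)
include hφ

lemma bddAbove_polar_set (ξ : EuclideanSpace ℝ (Fin N)) :
    BddAbove ((fun η => ⟪ξ, η⟫) '' {η : EuclideanSpace ℝ (Fin N) | φ η ≤ 1}) := by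
  obtain ⟨C, hC, hb⟩ := hφ.exists_norm_le_mul_and_le_mul_norm
  refine ⟨‖ξ‖ * C, ?_⟩
  rintro _ ⟨η, hη : φ η ≤ 1, rfl⟩
  calc ⟪ξ, η⟫ ≤ ‖ξ‖ * ‖η‖ := real_inner_le_norm ξ η
    _ ≤ ‖ξ‖ * C := by gcongr; nlinarith [(hb η).1]

lemma inner_le_polar {ξ η : EuclideanSpace ℝ (Fin N)} (hη : φ η ≤ 1) : ⟪ξ, η⟫ ≤ polar φ ξ :=
  le_csSup (bddAbove_polar_set hφ ξ) ⟨η, hη, rfl⟩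

lemma polar_le {ξ : EuclideanSpace ℝ (Fin N)} {a : ℝ} (h : ∀ η, φ η ≤ 1 → ⟪ξ, η⟫ ≤ a) :
    polar φ ξ ≤ a :=
  csSup_le ⟨0, 0, by simp [hφ.map_zero], inner_zero_right ξ⟩
    (by rintro _ ⟨η, hη, rfl⟩; exact h η hη)

lemma polar_nonneg (ξ : EuclideanSpace ℝ (Fin N)) : 0 ≤ polar φ ξ := by
  simpa using inner_le_polar hφ (ξ := ξ) (η := 0) (by simp [hφ.map_zero])

lemma inner_le_polar_mul (ξ η : EuclideanSpace ℝ (Fin N)) : ⟪ξ, η⟫ ≤ polar φ ξ * φ η := by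
  rcases eq_or_ne η 0 with rfl | hη
  · simp [hφ.map_zero]
  have hpos := hφ.pos η hη
  have h := inner_le_polar hφ (ξ := ξ) (η := (φ η)⁻¹ • η)
    (by rw [hφ.homog _ _ (by positivity), inv_mul_cancel₀ hpos.ne'])
  rw [real_inner_smul_right, inv_mul_le_iff₀ hpos] at h
  linarith

lemma polar_neg (ξ : EuclideanSpace ℝ (Fin N)) : polar φ (-ξ) = polar φ ξ := by
  unfold polar
  congr 1
  ext a
  constructor <;> rintro ⟨η, hη, rfl⟩ <;>
    exact ⟨-η, by simpa [hφ.even] using hη, by simp⟩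

lemma polar_sub_comm (x y : EuclideanSpace ℝ (Fin N)) : polar φ (x - y) = polar φ (y - x) := by
  rw [← neg_sub, polar_neg hφ]

lemma polar_add_le (ξ ζ : EuclideanSpace ℝ (Fin N)) :
    polar φ (ξ + ζ) ≤ polar φ ξ + polar φ ζ :=
  polar_le hφ fun η hη => by
    rw [inner_add_left]; exact add_le_add (inner_le_polar hφ hη) (inner_le_polar hφ hη)

lemma exists_norm_le_mul_polar_and_polar_le_mul_norm :
    ∃ C > 0, ∀ ξ, ‖ξ‖ ≤ C * polar φ ξ ∧ polar φ ξ ≤ C * ‖ξ‖ := by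
  obtain ⟨C, hC, hb⟩ := hφ.exists_norm_le_mul_and_le_mul_norm
  refine ⟨C, hC, fun ξ => ⟨?_, ?_⟩⟩
  · rcases eq_or_ne ξ 0 with rfl | hξ
    · simpa using mul_nonneg hC.le (polar_nonneg hφ 0)
    have hn : 0 < ‖ξ‖ := norm_pos_iff.mpr hξ
    have h := inner_le_polar hφ (ξ := ξ) (η := (C * ‖ξ‖)⁻¹ • ξ) (by
      rw [hφ.homog _ _ (by positivity), inv_mul_le_iff₀ (by positivity), mul_one]
      exact (hb ξ).2)
    rw [real_inner_smul_right, real_inner_self_eq_norm_sq, inv_mul_le_iff₀ (by positivity)] at h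
    nlinarith
  · refine polar_le hφ fun η hη => ?_
    calc ⟪ξ, η⟫ ≤ ‖ξ‖ * ‖η‖ := real_inner_le_norm ξ η
      _ ≤ ‖ξ‖ * C := by gcongr; nlinarith [(hb η).1]
      _ = C * ‖ξ‖ := mul_comm _ _

lemma continuous_polar : Continuous (polar φ) := by
  obtain ⟨C, -, hC⟩ := exists_norm_le_mul_polar_and_polar_le_mul_norm hφ
  refine (LipschitzWith.of_dist_le' (K := C) fun ξ ζ => ?_).continuous
  have h₁ := polar_add_le hφ (ξ - ζ) ζ
  have h₂ := polar_add_le hφ (ζ - ξ) ξ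
  rw [sub_add_cancel] at h₁ h₂
  rw [polar_sub_comm hφ ζ ξ] at h₂
  rw [Real.dist_eq, dist_eq_norm, abs_sub_le_iff]
  constructor <;> linarith [(hC (ξ - ζ)).2]

lemma one_le_of_one_le_inner {u v : EuclideanSpace ℝ (Fin N)} (hu : polar φ u ≤ 1)
    (h : 1 ≤ ⟪u, v⟫) : 1 ≤ φ v := by
  nlinarith [inner_le_polar_mul hφ u v, hφ.nonneg v]

lemma le_one_of_inner_le_polar {v : EuclideanSpace ℝ (Fin N)}
    (h : ∀ u, ⟪v, u⟫ ≤ polar φ u) : φ v ≤ 1 := by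
  by_contra! hv
  obtain ⟨f, s, hfs, hsv⟩ := geometric_hahn_banach_closed_point (hφ.convexOn.convex_le 1)
    (isClosed_univ.inter (isClosed_le hφ.continuous continuous_const)) (x := v) (by simp [hv])
  set w := (InnerProductSpace.toDual ℝ _).symm f
  have hw : polar φ w ≤ s := polar_le hφ fun η hη => by
    rw [InnerProductSpace.toDual_symm_apply]; exact (hfs η ⟨trivial, hη⟩).le
  have := h w
  rw [real_inner_comm, InnerProductSpace.toDual_symm_apply] at this
  linarith

end Polar

section Dist

variable {N : ℕ} {φ : EuclideanSpace ℝ (Fin N) → ℝ} (hφ : IsAnisoNorm φ)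
  {F : Set (EuclideanSpace ℝ (Fin N))}
include hφ

lemma rdistP_nonneg (x : EuclideanSpace ℝ (Fin N)) (F : Set (EuclideanSpace ℝ (Fin N))) :
    0 ≤ rdistP φ x F :=
  Real.sInf_nonneg (by rintro _ ⟨y, -, rfl⟩; exact polar_nonneg hφ _)

lemma rdistP_le {x y : EuclideanSpace ℝ (Fin N)} (hy : y ∈ F) :
    rdistP φ x F ≤ polar φ (x - y) :=
  csInf_le ⟨0, by rintro _ ⟨z, -, rfl⟩; exact polar_nonneg hφ _⟩ ⟨y, hy, rfl⟩

lemma rdistP_eq_zero_of_mem {x : EuclideanSpace ℝ (Fin N)} (hx : x ∈ F) : rdistP φ x F = 0 :=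
  le_antisymm (by simpa [polar_zero] using rdistP_le hφ (x := x) hx)
    (rdistP_nonneg hφ x F)

lemma rdistP_le_of_mem_closure {x y : EuclideanSpace ℝ (Fin N)} (hy : y ∈ closure F) :
    rdistP φ x F ≤ polar φ (x - y) :=
  closure_minimal (fun _ hz => rdistP_le hφ hz)
    (isClosed_le continuous_const ((continuous_polar hφ).comp (continuous_sub_left x))) hy

lemma rdistP_le_add (hF : F.Nonempty) (x z : EuclideanSpace ℝ (Fin N)) :
    rdistP φ x F ≤ rdistP φ z F + polar φ (x - z) := by
  rw [← sub_le_iff_le_add]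
  refine le_csInf (hF.image _) ?_
  rintro _ ⟨y, hy, rfl⟩
  have := polar_add_le hφ (x - z) (z - y)
  rw [sub_add_sub_cancel] at this
  linarith [rdistP_le hφ (x := x) hy]

lemma abs_rdistP_sub_le (hF : F.Nonempty) (x z : EuclideanSpace ℝ (Fin N)) :
    |rdistP φ x F - rdistP φ z F| ≤ polar φ (x - z) := by
  rw [abs_sub_le_iff]
  constructor
  · linarith [rdistP_le_add hφ hF x z]
  · linarith [rdistP_le_add hφ hF z x, polar_sub_comm hφ x z]

lemma exists_mem_closure_polar_eq_rdistP (hF : F.Nonempty) (x : EuclideanSpace ℝ (Fin N)) :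
    ∃ y ∈ closure F, polar φ (x - y) = rdistP φ x F := by
  obtain ⟨C, hC, hb⟩ := exists_norm_le_mul_polar_and_polar_le_mul_norm hφ
  have hcont : Continuous fun y => polar φ (x - y) :=
    (continuous_polar hφ).comp (continuous_sub_left x)
  have hcoercive : Tendsto (fun y => polar φ (x - y)) (cocompact _) atTop := by
    have hlin : Tendsto (fun y : EuclideanSpace ℝ (Fin N) => ‖y‖ / C + -‖x‖ / C)
        (cocompact _) atTop :=
      (tendsto_norm_cocompact_atTop.atTop_div_const hC).atTop_add tendsto_const_nhds
    refine tendsto_atTop_mono (fun y => ?_) hlin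
    have := (hb (x - y)).1
    have := norm_sub_norm_le y x
    rw [norm_sub_rev] at this
    rw [← add_div, div_le_iff₀ hC]
    linarith
  obtain ⟨y₀, hy₀⟩ := id hF
  obtain ⟨y, hy, hmin⟩ := hcont.continuousOn.exists_isMinOn' isClosed_closure
    (subset_closure hy₀) ((hcoercive.eventually_ge_atTop _).filter_mono inf_le_left)
  refine ⟨y, hy, le_antisymm ?_ (rdistP_le_of_mem_closure hφ hy)⟩
  exact le_csInf (hF.image _) (by
    rintro _ ⟨z, hz, rfl⟩; exact hmin (subset_closure hz))

lemma rdistP_pos (hF : F.Nonempty) {x : EuclideanSpace ℝ (Fin N)} (hx : x ∉ closure F) :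
    0 < rdistP φ x F := by
  obtain ⟨C, hC, hb⟩ := exists_norm_le_mul_polar_and_polar_le_mul_norm hφ
  obtain ⟨y, hy, hxy⟩ := exists_mem_closure_polar_eq_rdistP hφ hF x
  have : 0 < ‖x - y‖ := norm_pos_iff.mpr (sub_ne_zero.mpr (by rintro rfl; exact hx hy))
  rw [← hxy]
  nlinarith [(hb (x - y)).1]

end Dist

section SignedDist

variable {N : ℕ} {φ : EuclideanSpace ℝ (Fin N) → ℝ} (hφ : IsAnisoNorm φ)
  {E : Set (EuclideanSpace ℝ (Fin N))}
include hφ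

lemma rdistP_compl_add_rdistP_le {x y : EuclideanSpace ℝ (Fin N)} (hx : x ∈ E) (hy : y ∉ E) :
    rdistP φ x Eᶜ + rdistP φ y E ≤ polar φ (x - y) := by
  obtain ⟨z, hz, hzE, hzE'⟩ := isPreconnected_closed_iff.mp (convex_segment x y).isPreconnected
    (closure E) (closure Eᶜ) isClosed_closure isClosed_closure
    (fun _ _ => (em _).imp (subset_closure ·) (subset_closure ·))
    ⟨x, left_mem_segment ℝ x y, subset_closure hx⟩ ⟨y, right_mem_segment ℝ x y, subset_closure hy⟩
  obtain ⟨a, b, ha, hb, hab, rfl⟩ := hz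
  obtain rfl : a = 1 - b := eq_sub_of_add_eq hab
  have hxz : x - ((1 - b) • x + b • y) = b • (x - y) := by module
  have hyz : y - ((1 - b) • x + b • y) = (1 - b) • (y - x) := by module
  calc rdistP φ x Eᶜ + rdistP φ y E
      ≤ polar φ (x - ((1 - b) • x + b • y)) + polar φ (y - ((1 - b) • x + b • y)) :=
        add_le_add (rdistP_le_of_mem_closure hφ hzE') (rdistP_le_of_mem_closure hφ hzE)
    _ = polar φ (x - y) := by
        rw [hxz, hyz, polar_smul φ hb, polar_smul φ ha, polar_sub_comm hφ y x]
        ring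

lemma abs_signedDistP_sub_le (hE : E.Nonempty) (hE' : Eᶜ.Nonempty)
    (x y : EuclideanSpace ℝ (Fin N)) :
    |signedDistP φ E x - signedDistP φ E y| ≤ polar φ (x - y) := by
  have hsymm := polar_sub_comm hφ x y
  have hxE := rdistP_nonneg hφ x E
  have hyE := rdistP_nonneg hφ y E
  have hxE' := rdistP_nonneg hφ x Eᶜ
  have hyE' := rdistP_nonneg hφ y Eᶜ
  unfold signedDistP
  by_cases hx : x ∈ E <;> by_cases hy : y ∈ E
  · rw [rdistP_eq_zero_of_mem hφ hx, rdistP_eq_zero_of_mem hφ hy, ← abs_neg]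
    convert abs_rdistP_sub_le hφ hE' x y using 2
    ring
  · rw [rdistP_eq_zero_of_mem hφ hx, rdistP_eq_zero_of_mem hφ (show y ∈ Eᶜ from hy), abs_le]
    constructor <;> linarith [rdistP_compl_add_rdistP_le hφ hx hy]
  · rw [rdistP_eq_zero_of_mem hφ (show x ∈ Eᶜ from hx), rdistP_eq_zero_of_mem hφ hy, abs_le]
    constructor <;> linarith [rdistP_compl_add_rdistP_le hφ hy hx]
  · rw [rdistP_eq_zero_of_mem hφ (show x ∈ Eᶜ from hx),
      rdistP_eq_zero_of_mem hφ (show y ∈ Eᶜ from hy), sub_zero, sub_zero]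
    exact abs_rdistP_sub_le hφ hE x y

end SignedDist

theorem HasFDerivAt.apply_le_of_eventually_le {W : Type*} [NormedAddCommGroup W]
    [NormedSpace ℝ W] {f : W → ℝ} {f' : W →L[ℝ] ℝ} {x v : W} {a : ℝ} (hf : HasFDerivAt f f' x)
    (h : ∀ᶠ s in 𝓝[>] (0 : ℝ), f (x + s • v) ≤ f x + s * a) : f' v ≤ a := by
  have hline : HasDerivAt (fun s : ℝ => f (x + s • v)) (f' v) 0 := by
    have hf₀ : HasFDerivAt f f' (x + (0 : ℝ) • v) := by simpa using hf
    exact hf₀.comp_hasDerivAt 0 (by simpa using ((hasDerivAt_id (0 : ℝ)).smul_const v).const_add x)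
  refine le_of_tendsto (by simpa using hline.tendsto_slope_zero_right) ?_
  filter_upwards [h, self_mem_nhdsWithin] with s hs (hs0 : 0 < s)
  rw [inv_mul_le_iff₀ hs0]
  linarith

section Eikonal

variable {N : ℕ} {φ : EuclideanSpace ℝ (Fin N) → ℝ} (hφ : IsAnisoNorm φ)
  {f : EuclideanSpace ℝ (Fin N) → ℝ} {x : EuclideanSpace ℝ (Fin N)}
include hφ

lemma exists_lipschitzWith_of_abs_sub_le_polar (hlip : ∀ z w, |f z - f w| ≤ polar φ (z - w)) :
    ∃ K, LipschitzWith K f := by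
  obtain ⟨C, -, hC⟩ := exists_norm_le_mul_polar_and_polar_le_mul_norm hφ
  refine ⟨_, LipschitzWith.of_dist_le' (K := C) fun z w => ?_⟩
  rw [Real.dist_eq, dist_eq_norm]
  exact (hlip z w).trans (hC _).2

lemma phi_gradient_le_one_of_abs_sub_le_polar (hf : DifferentiableAt ℝ f x)
    (hlip : ∀ z w, |f z - f w| ≤ polar φ (z - w)) : φ (gradient f x) ≤ 1 := by
  refine le_one_of_inner_le_polar hφ fun u => ?_
  rw [inner_gradient_left]
  refine hf.hasFDerivAt.apply_le_of_eventually_le ?_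
  filter_upwards [self_mem_nhdsWithin] with s (hs : 0 < s)
  have := (abs_le.mp (hlip (x + s • u) x)).2
  rwa [add_sub_cancel_left, polar_smul φ hs.le, sub_le_iff_le_add'] at this

lemma exists_polar_eq_one_apply_le_neg_one {F : Set (EuclideanSpace ℝ (Fin N))}
    (hF : F.Nonempty) {f' : EuclideanSpace ℝ (Fin N) →L[ℝ] ℝ} (hf : HasFDerivAt f f' x)
    (hle : ∀ z, f z ≤ rdistP φ z F) (heq : f x = rdistP φ x F) (hpos : 0 < rdistP φ x F) :
    ∃ u, polar φ u = 1 ∧ f' u ≤ -1 := by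
  obtain ⟨y, hy, hxy⟩ := exists_mem_closure_polar_eq_rdistP hφ hF x
  set d := rdistP φ x F
  have hdescent : f' (y - x) ≤ -d := by
    refine hf.apply_le_of_eventually_le ?_
    filter_upwards [Ioo_mem_nhdsGT zero_lt_one] with s ⟨hs0, hs1⟩
    have hsub : x + s • (y - x) - y = (1 - s) • (x - y) := by module
    calc f (x + s • (y - x)) ≤ rdistP φ (x + s • (y - x)) F := hle _
      _ ≤ polar φ (x + s • (y - x) - y) := rdistP_le_of_mem_closure hφ hy
      _ = f x + s * -d := by rw [hsub, polar_smul φ (by linarith), hxy, heq]; ring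
  refine ⟨d⁻¹ • (y - x), ?_, ?_⟩
  · rw [polar_smul φ (inv_nonneg.mpr hpos.le), ← polar_sub_comm hφ, hxy, inv_mul_cancel₀ hpos.ne']
  · rw [map_smul, smul_eq_mul, inv_mul_le_iff₀ hpos]
    linarith

lemma one_le_phi_gradient_signedDistP {E : Set (EuclideanSpace ℝ (Fin N))} (hE : E.Nonempty)
    (hE' : Eᶜ.Nonempty) (hx : x ∉ frontier E) (hd : DifferentiableAt ℝ (signedDistP φ E) x) :
    1 ≤ φ (gradient (signedDistP φ E) x) := by
  rw [frontier_eq_closure_inter_closure] at hx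
  by_cases hxE : x ∈ E
  · obtain ⟨u, hu, hDu⟩ := exists_polar_eq_one_apply_le_neg_one hφ hE' hd.hasFDerivAt.neg
      (fun z => by simp only [Pi.neg_apply, signedDistP]; linarith [rdistP_nonneg hφ z E])
      (by simp [signedDistP, rdistP_eq_zero_of_mem hφ hxE])
      (rdistP_pos hφ hE' fun h => hx ⟨subset_closure hxE, h⟩)
    refine one_le_of_one_le_inner hφ hu.le ?_
    rw [real_inner_comm, inner_gradient_left]
    simp only [neg_apply] at hDu
    linarith
  · obtain ⟨u, hu, hDu⟩ := exists_polar_eq_one_apply_le_neg_one hφ hE hd.hasFDerivAt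
      (fun z => by simp only [signedDistP]; linarith [rdistP_nonneg hφ z Eᶜ])
      (by simp [signedDistP, rdistP_eq_zero_of_mem hφ (show x ∈ Eᶜ from hxE)])
      (rdistP_pos hφ hE fun h => hx ⟨h, subset_closure hxE⟩)
    refine one_le_of_one_le_inner hφ (u := -u) (by rw [polar_neg hφ, hu]) ?_
    rw [real_inner_comm, inner_gradient_left, map_neg]
    linarith

end Eikonal

theorem statement9_general {N : ℕ} (φ : EuclideanSpace ℝ (Fin N) → ℝ)
    (hφ : IsAnisoNorm φ) (E : Set (EuclideanSpace ℝ (Fin N)))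
    (hne : E.Nonempty) (hne' : Eᶜ.Nonempty) :
    (∀ x y, |signedDistP φ E x - signedDistP φ E y| ≤ polar φ (x - y)) ∧
    (∀ x ∉ frontier E, DifferentiableAt ℝ (signedDistP φ E) x →
      φ (gradient (signedDistP φ E) x) = 1) ∧
    (∀ᵐ x ∂(MeasureTheory.volume.restrict (frontier E)ᶜ),
      DifferentiableAt ℝ (signedDistP φ E) x ∧ φ (gradient (signedDistP φ E) x) = 1) := by
  have hlip := abs_signedDistP_sub_le hφ hne hne'
  have heikonal : ∀ x ∉ frontier E, DifferentiableAt ℝ (signedDistP φ E) x →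
      φ (gradient (signedDistP φ E) x) = 1 := fun x hx hd =>
    le_antisymm (phi_gradient_le_one_of_abs_sub_le_polar hφ hd hlip)
      (one_le_phi_gradient_signedDistP hφ hne hne' hx hd)
  obtain ⟨K, hK⟩ := exists_lipschitzWith_of_abs_sub_le_polar hφ hlip
  refine ⟨hlip, heikonal, ?_⟩
  filter_upwards [ae_restrict_of_ae hK.ae_differentiableAt,
    ae_restrict_mem isClosed_frontier.measurableSet.compl] with x hd hx
  exact ⟨hd, heikonal x hx hd⟩

theorem statement9 {N : ℕ} (hN : 0 < N) (φ : EuclideanSpace ℝ (Fin N) → ℝ)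
    (hφ : IsAnisoNorm φ) (E : Set (EuclideanSpace ℝ (Fin N))) (hE : IsClosed E)
    (hne : E.Nonempty) (hne' : Eᶜ.Nonempty) :
    (∀ x y, |signedDistP φ E x - signedDistP φ E y| ≤ polar φ (x - y)) ∧
    (∀ x ∉ frontier E, DifferentiableAt ℝ (signedDistP φ E) x →
      φ (gradient (signedDistP φ E) x) = 1) ∧
    (∀ᵐ x ∂(MeasureTheory.volume.restrict (frontier E)ᶜ),
      DifferentiableAt ℝ (signedDistP φ E) x ∧ φ (gradient (signedDistP φ E) x) = 1) :=
  statement9_general φ hφ E hne hne'
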